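/- Let G be a finite simple bipartite graph that contains no cycle of length 4k for any integer k ≥ 1. Then E_per(G) = E(G), i.e., the permanental energy of G equals its adjacency energy. -/

import Mathlib

/-!
If every point `v` moved by a permutation `σ` is adjacent to `σ v`, each cycle of `σ` of length at
least three traces a cycle of `G` of the same length; bipartiteness and the absence of `4k`-cycles
then make every cycle length of `σ` congruent to `2` mod `4`, whence `sign σ = i ^ |supp σ|`.
This is exactly the factor between the `σ`-terms of `det (i x - A)` and `i ^ n · per (x - A)`,
and all other terms vanish in both. Hence `charpoly A (i x) = i ^ n · π(G, x)`: the permanental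
roots are the eigenvalues multiplied by `-i`, so they have the same moduli.
-/

open Polynomial Matrix

/-- The permanental polynomial `per(x·I − A)` of a square matrix `A`. -/
noncomputable def permPoly {n : ℕ} {R : Type*} [CommRing R] (A : Matrix (Fin n) (Fin n) R) :
    Polynomial R :=
  ((Polynomial.X : R[X]) • (1 : Matrix (Fin n) (Fin n) R[X]) - A.map Polynomial.C).permanent

/-- The permanental polynomial `π(G,x) = per(x·I − A(G))` of a graph, over `ℂ`. -/
noncomputable def graphPermPoly {n : ℕ} (G : SimpleGraph (Fin n)) : Polynomial ℂ :=
  letI := Classical.decRel G.Adj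
  permPoly (G.adjMatrix ℂ)

/-- The permanental energy `E_per(G)`: the sum of the moduli of the roots (with
multiplicity) of the permanental polynomial of `G`. -/
noncomputable def perEnergy {n : ℕ} (G : SimpleGraph (Fin n)) : ℝ :=
  ((graphPermPoly G).roots.map (fun z : ℂ => ‖z‖)).sum

/-- The (adjacency) energy of a graph: the sum of the moduli of the roots (with
multiplicity) of the characteristic polynomial of its adjacency matrix. -/
noncomputable def adjEnergy {n : ℕ} (G : SimpleGraph (Fin n)) : ℝ :=
  letI := Classical.decRel G.Adj
  (((G.adjMatrix ℂ).charpoly).roots.map (fun z : ℂ => ‖z‖)).sum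

open Equiv Finset

namespace Equiv.Perm

theorem sign_eq_I_pow_card_support {α : Type*} [Fintype α] [DecidableEq α] {σ : Perm α}
    (h : ∀ m ∈ σ.cycleType, m % 4 = 2) : (sign σ : ℂ) = Complex.I ^ #σ.support := by
  rw [sign_of_cycleType, ← sum_cycleType]
  generalize σ.cycleType = s at h
  induction s using Multiset.induction_on with
  | empty => simp
  | cons m s ih =>
    obtain ⟨q, rfl⟩ : ∃ q, m = 4 * q + 2 := ⟨m / 4, by grind [h m (Multiset.mem_cons_self ..)]⟩
    have ih := ih fun k hk => h k (Multiset.mem_cons_of_mem hk)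
    push_cast at ih ⊢
    simp only [Multiset.sum_cons, Multiset.card_cons, pow_add, pow_mul, ← ih, Complex.I_sq]
    norm_num

end Equiv.Perm

namespace SimpleGraph

variable {V : Type*} [Fintype V] [DecidableEq V] {G : SimpleGraph V}

theorem cycleGraph_isContained_of_isCycle {c : Perm V} (hc : c.IsCycle)
    (hadj : ∀ v, c v ≠ v → G.Adj v (c v)) : cycleGraph #c.support ⊑ G := by
  obtain ⟨v, hv, -⟩ := id hc
  have horder := hc.orderOf
  -- makes `Fin #c.support` an additive group
  have : NeZero #c.support := ⟨(card_pos.2 ⟨v, Perm.mem_support.2 hv⟩).ne'⟩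
  have hmoved (k : ℕ) : c ((c ^ k) v) ≠ (c ^ k) v :=
    Perm.mem_support.1 (Perm.pow_apply_mem_support.2 (Perm.mem_support.2 hv))
  have hstep {a b : Fin #c.support} (hab : ((b - a : Fin _) : ℕ) = 1) :
      (c ^ (b : ℕ)) v = c ((c ^ (a : ℕ)) v) := by
    have hb : (b : ℕ) = (a + 1) % orderOf c := by
      rw [horder, ← hab, ← Fin.val_add, add_sub_cancel]
    rw [hb, pow_mod_orderOf, pow_succ', Perm.mul_apply]
  refine ⟨⟨⟨fun i => (c ^ (i : ℕ)) v, fun {a b} hab => ?_⟩, fun a b hab => ?_⟩⟩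
  · rcases cycleGraph_adj'.1 hab with h | h
    · rw [hstep h]
      exact (hadj _ (hmoved _)).symm
    · rw [hstep h]
      exact hadj _ (hmoved _)
  · have := hc.pow_eq_pow_iff.2 ⟨v, hv, hab⟩
    rw [pow_inj_mod, horder, Nat.mod_eq_of_lt a.2, Nat.mod_eq_of_lt b.2] at this
    exact Fin.ext this

theorem mod_four_eq_two_of_mem_cycleType (hbip : G.Colorable 2)
    (hcyc : ∀ (v : V) (w : G.Walk v v), w.IsCycle → ¬ 4 ∣ w.length) {σ : Perm V}
    (hσ : ∀ v, σ v ≠ v → G.Adj v (σ v)) {m : ℕ} (hm : m ∈ σ.cycleType) : m % 4 = 2 := by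
  rw [Perm.cycleType_def, Multiset.mem_map] at hm
  obtain ⟨c, hc, rfl⟩ := hm
  obtain ⟨hcycle, hcσ⟩ := Perm.mem_cycleFactorsFinset_iff.1 hc
  have hcadj (v : V) (hv : c v ≠ v) : G.Adj v (c v) := by
    have hcv := hcσ v (Perm.mem_support.2 hv)
    rw [hcv] at hv ⊢
    exact hσ v hv
  show #c.support % 4 = 2
  rcases hcycle.two_le_card_support.eq_or_lt with htwo | hthree
  · rw [← htwo]
  obtain ⟨v, p, hp, hlen⟩ :=
    (cycleGraph_isContained_iff hthree).1 (cycleGraph_isContained_of_isCycle hcycle hcadj)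
  have heven : Even #c.support := hlen ▸ two_colorable_iff_forall_loop_even.1 hbip v p
  have hnot4 : ¬ 4 ∣ #c.support := hlen ▸ hcyc v p hp
  grind

end SimpleGraph

namespace Matrix

variable {n R : Type*} [Fintype n] [DecidableEq n] [CommRing R]

theorem prod_charmatrix_apply_perm {A : Matrix n n R} (hA : ∀ i, A i i = 0) (σ : Perm n) :
    ∏ i, A.charmatrix (σ i) i = X ^ #σ.supportᶜ * C (∏ i ∈ σ.support, -A (σ i) i) := by
  rw [← prod_compl_mul_prod σ.support, map_prod]
  congr 1
  · refine (prod_congr rfl fun i hi => ?_).trans (prod_const X)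
    rw [Perm.notMem_support.1 (mem_compl.1 hi), charmatrix_apply_eq, hA, map_zero, sub_zero]
  · refine prod_congr rfl fun i hi => ?_
    rw [charmatrix_apply_ne _ _ _ (Perm.mem_support.1 hi), map_neg]

theorem charpoly_comp_C_mul_X_eq_permanent {A : Matrix n n R} (hA : ∀ i, A i i = 0) (c : R)
    (hsign : ∀ σ : Perm n, (∀ i, σ i ≠ i → A (σ i) i ≠ 0) → (Perm.sign σ : R) = c ^ #σ.support) :
    A.charpoly.comp (C c * X) = C (c ^ Fintype.card n) * A.charmatrix.permanent := by
  rw [charpoly, det_apply, permanent, ← coe_compRingHom_apply, map_sum, mul_sum]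
  refine sum_congr rfl fun σ _ => ?_
  rw [prod_charmatrix_apply_perm hA, coe_compRingHom_apply]
  by_cases hσ : ∀ i, σ i ≠ i → A (σ i) i ≠ 0
  · rw [Units.smul_def, zsmul_eq_mul, mul_comp, intCast_comp, ← C_eq_intCast, hsign σ hσ,
      mul_comp, C_comp, X_pow_comp, mul_pow, ← card_compl_add_card σ.support]
    simp only [pow_add, C_mul, C_pow]
    ring
  · push Not at hσ
    obtain ⟨i, hi, h0⟩ := hσ
    have : ∏ i ∈ σ.support, -A (σ i) i = 0 :=
      prod_eq_zero (Perm.mem_support.2 hi) (by rw [h0, neg_zero])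
    simp [this]

end Matrix

theorem permPoly_eq_permanent_charmatrix {n : ℕ} {R : Type*} [CommRing R]
    (A : Matrix (Fin n) (Fin n) R) : permPoly A = A.charmatrix.permanent := by
  rw [permPoly, charmatrix, scalar_apply, smul_one_eq_diagonal]
  rfl

theorem SimpleGraph.charpoly_adjMatrix_comp_I_mul_X {V : Type*} [Fintype V] [DecidableEq V]
    {G : SimpleGraph V} [DecidableRel G.Adj] (hbip : G.Colorable 2)
    (hcyc : ∀ (v : V) (w : G.Walk v v), w.IsCycle → ¬ 4 ∣ w.length) :
    (G.adjMatrix ℂ).charpoly.comp (C Complex.I * X) =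
      C (Complex.I ^ Fintype.card V) * (G.adjMatrix ℂ).charmatrix.permanent := by
  refine charpoly_comp_C_mul_X_eq_permanent (fun i => by simp) Complex.I fun σ hσ =>
    Perm.sign_eq_I_pow_card_support fun m hm => mod_four_eq_two_of_mem_cycleType hbip hcyc ?_ hm
  intro v hv
  exact (G.adj_comm _ _).1 (by simpa using hσ v hv)

/-- If `G` is bipartite and contains no cycle of length `4k` for any `k ≥ 1`, then
the permanental energy of `G` equals its adjacency energy. -/
theorem perEnergy_eq_adjEnergy {n : ℕ} (G : SimpleGraph (Fin n))
    (hbip : G.Colorable 2)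
    (hcyc : ∀ (v : Fin n) (w : G.Walk v v), w.IsCycle → ¬ (4 ∣ w.length)) :
    perEnergy G = adjEnergy G := by
  classical
  have hroots :
      (graphPermPoly G).roots.map (Complex.I * ·) = (G.adjMatrix ℂ).charpoly.roots := by
    rw [graphPermPoly, permPoly_eq_permanent_charmatrix,
      ← roots_C_mul _ (pow_ne_zero _ Complex.I_ne_zero),
      ← G.charpoly_adjMatrix_comp_I_mul_X hbip hcyc]
    simpa using map_roots_comp_C_mul_X_add_C _ Complex.I 0 (isUnit_iff_ne_zero.2 Complex.I_ne_zero)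
  rw [adjEnergy, ← hroots, Multiset.map_map]
  simp [perEnergy]
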